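/- Let P be a k×k permutation matrix and let t be a positive integer. Suppose that ex(n,P)/n tends to a real number c_P as n → ∞ and that S_P(n)^{1/n} tends to a real number s_P as n → ∞. Then s_P ≤ 15^{c_P/t} · (t!)^{1/t} · c_P. -/

import Mathlib

open Filter

noncomputable section

/-- An `n × n` 0-1 matrix `A` contains the `k × k` pattern `P` if there are strictly
increasing rows and columns selecting a submatrix that dominates `P`. -/
def Contains {k n : ℕ} (P : Matrix (Fin k) (Fin k) Bool)
    (A : Matrix (Fin n) (Fin n) Bool) : Prop :=
  ∃ r : Fin k → Fin n, ∃ c : Fin k → Fin n,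
    StrictMono r ∧ StrictMono c ∧ ∀ i j, P i j = true → A (r i) (c j) = true

/-- `A` avoids the pattern `P`. -/
def Avoids {k n : ℕ} (P : Matrix (Fin k) (Fin k) Bool)
    (A : Matrix (Fin n) (Fin n) Bool) : Prop := ¬ Contains P A

/-- The permutation matrix of a permutation. -/
def permMatrix {n : ℕ} (σ : Equiv.Perm (Fin n)) : Matrix (Fin n) (Fin n) Bool :=
  fun i j => decide (σ i = j)

/-- `A` is a permutation matrix. -/
def IsPermMatrix {n : ℕ} (A : Matrix (Fin n) (Fin n) Bool) : Prop :=
  ∃ σ : Equiv.Perm (Fin n), A = permMatrix σ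

/-- Number of ones of a 0-1 matrix. -/
def numOnes {m n : ℕ} (A : Matrix (Fin m) (Fin n) Bool) : ℕ :=
  (Finset.univ.filter fun p : Fin m × Fin n => A p.1 p.2 = true).card

/-- `SW P n = S_P(n)`, the number of `n × n` permutation matrices avoiding `P`. -/
def SW {k : ℕ} (P : Matrix (Fin k) (Fin k) Bool) (n : ℕ) : ℕ :=
  Nat.card {A : Matrix (Fin n) (Fin n) Bool // IsPermMatrix A ∧ Avoids P A}

/-- `exFH P n = ex(n, P)`, the maximum number of ones in an `n × n` 0-1 matrix
avoiding `P`. -/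
def exFH {k : ℕ} (P : Matrix (Fin k) (Fin k) Bool) (n : ℕ) : ℕ :=
  sSup {m : ℕ | ∃ A : Matrix (Fin n) (Fin n) Bool, Avoids P A ∧ numOnes A = m}

/-- `F c = inf over positive integers t of (t!)^(1/t) * 15^(c/t) / c`. -/
def F (c : ℝ) : ℝ :=
  ⨅ t : ℕ+, ((t : ℕ).factorial : ℝ) ^ ((1 : ℝ) / (t : ℕ)) * (15 : ℝ) ^ (c / (t : ℕ)) / c

/-- The block (among `n` consecutive blocks of length `t`) containing a given
index of `Fin (t * n)`. -/
def blockOf {t n : ℕ} (ht : 0 < t) (i : Fin (t * n)) : Fin n :=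
  ⟨(i : ℕ) / t, by
    rw [Nat.div_lt_iff_lt_mul ht]
    exact lt_of_lt_of_le i.isLt (le_of_eq (mul_comm t n))⟩

/-- The `t`-contraction of an `(t*n) × (t*n)` 0-1 matrix: entry `(a,b)` is 1 iff
the block `I_a × I_b` contains a one. -/
def contMat {t n : ℕ} (ht : 0 < t) (A : Matrix (Fin (t * n)) (Fin (t * n)) Bool) :
    Matrix (Fin n) (Fin n) Bool :=
  fun a b => @decide (∃ i j, blockOf ht i = a ∧ blockOf ht j = b ∧ A i j = true)
    (@Fintype.decidableExistsFintype _ _ (fun _ => Fintype.decidableExistsFintype) _)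

end

/-!
Write `A(m)` for the number of `P`-avoiding `m × m` 0-1 matrices. Replacing each `t × t` block of
a `P`-avoiding matrix by a single entry, one iff the block is nonzero, gives a `P`-avoiding matrix:
since `P` has one one per row, a copy of `P` in the contraction lifts to a copy in the original.
For `t = 2` each one of the contraction comes from one of 15 nonzero `2 × 2` blocks, so
`A(2m) ≤ 15 ^ ex(m) · A(m)` (Klazar), and along powers of two
`A(2^j) ≤ 2 · 15 ^ (∑_{i<j} ex(2^i)) = 15 ^ ((c_P + o(1)) 2^j)`.

A `P`-avoiding permutation of size `t n` contracts to a `P`-avoiding `n × n` matrix `B`. Given `B`,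
each row `i` has at most `deg_B (block i)` possible column blocks, and two permutations with the
same column blocks differ by a block-preserving permutation, of which there are `(t!)^n`. By
AM-GM `∏_i deg_B (block i) ≤ (ex(n)/n)^(t n)`, so `S_P(t n) ≤ A(n) (t!)^n (ex(n)/n)^(t n)`.
Taking `(t 2^j)`-th roots and letting `j → ∞` gives the bound.
-/

open Finset

lemma prod_le_mean_pow {ι : Type*} (s : Finset ι) {d : ι → ℝ} (hd : ∀ i ∈ s, 0 ≤ d i) :
    ∏ i ∈ s, d i ≤ ((∑ i ∈ s, d i) / #s) ^ #s := by
  rcases s.eq_empty_or_nonempty with rfl | hs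
  · simp
  have hAMGM := Real.geom_mean_le_arith_mean s (fun _ => 1) d (by simp) (by simpa) hd
  simp only [Real.rpow_one, one_mul, sum_const, nsmul_eq_mul, mul_one] at hAMGM
  calc ∏ i ∈ s, d i = ((∏ i ∈ s, d i) ^ ((#s : ℝ)⁻¹)) ^ #s :=
        (Real.rpow_inv_natCast_pow (prod_nonneg hd) hs.card_pos.ne').symm
    _ ≤ ((∑ i ∈ s, d i) / #s) ^ #s :=
        pow_le_pow_left₀ (Real.rpow_nonneg (prod_nonneg hd) _) hAMGM _

open Asymptotics Topology in
lemma tendsto_sum_div_two_pow {x : ℕ → ℝ} {c : ℝ}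
    (h : Tendsto (fun i => x i / 2 ^ i) atTop (𝓝 c)) :
    Tendsto (fun j => (∑ i ∈ range j, x i) / 2 ^ j) atTop (𝓝 c) := by
  have hgeom (j : ℕ) : ∑ i ∈ range j, (2 : ℝ) ^ i = 2 ^ j - 1 := by
    rw [geom_sum_eq (by norm_num)]; norm_num
  have hsmall : (fun i => x i - c * 2 ^ i) =o[atTop] fun i => (2 : ℝ) ^ i := by
    rw [isLittleO_iff_tendsto' (.of_forall fun i hi => absurd hi (by positivity))]
    refine (tendsto_sub_nhds_zero_iff.2 h).congr fun i => ?_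
    field_simp
  have hsum : (fun j => ∑ i ∈ range j, (x i - c * 2 ^ i)) =o[atTop] fun j => (2 : ℝ) ^ j := by
    refine (hsmall.sum_range (fun i => by positivity) ?_).trans_isBigO ?_
    · simpa only [hgeom, sub_eq_add_neg] using tendsto_atTop_add_const_right _ (-1)
        (tendsto_pow_atTop_atTop_of_one_lt one_lt_two)
    · refine IsBigO.of_bound 1 (.of_forall fun j => ?_)
      have : (1 : ℝ) ≤ 2 ^ j := one_le_pow₀ one_le_two
      simp only [hgeom, Real.norm_eq_abs, abs_of_nonneg (sub_nonneg.2 this), one_mul,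
        abs_of_pos (by positivity : (0 : ℝ) < 2 ^ j)]
      linarith
  have hinv : Tendsto (fun j : ℕ => ((2 : ℝ) ^ j)⁻¹) atTop (𝓝 0) :=
    (tendsto_pow_atTop_atTop_of_one_lt one_lt_two).inv_tendsto_atTop
  have hlim := hsum.tendsto_div_nhds_zero.add (tendsto_const_nhds (x := c)) |>.sub
    (hinv.const_mul c)
  rw [zero_add, mul_zero, sub_zero] at hlim
  refine hlim.congr fun j => ?_
  rw [sum_sub_distrib, ← mul_sum, hgeom]
  field_simp
  ring

lemma rpow_le_of_le_mul_pow {X A x y : ℝ} {t n : ℕ} (hX : 0 ≤ X) (hA : 0 ≤ A) (hx : 0 ≤ x)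
    (hy : 0 ≤ y) (ht : 0 < t) (hn : 0 < n) (h : X ≤ A * (y ^ n * x ^ (t * n))) :
    X ^ (1 / ((t * n : ℕ) : ℝ)) ≤
      A ^ (1 / ((t * n : ℕ) : ℝ)) * y ^ (1 / t : ℝ) * x := by
  have hN : ((t * n : ℕ) : ℝ) ≠ 0 := by positivity
  calc X ^ (1 / ((t * n : ℕ) : ℝ))
      ≤ (A * (y ^ n * x ^ (t * n))) ^ (1 / ((t * n : ℕ) : ℝ)) :=
        Real.rpow_le_rpow hX h (by positivity)
    _ = A ^ (1 / ((t * n : ℕ) : ℝ)) * y ^ ((n : ℝ) * (1 / ((t * n : ℕ) : ℝ))) *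
          x ^ (((t * n : ℕ) : ℝ) * (1 / ((t * n : ℕ) : ℝ))) := by
        rw [Real.mul_rpow hA (by positivity), Real.mul_rpow (by positivity) (by positivity),
          ← Real.rpow_natCast y, ← Real.rpow_natCast x, ← Real.rpow_mul hy,
          ← Real.rpow_mul hx, mul_assoc]
    _ = A ^ (1 / ((t * n : ℕ) : ℝ)) * y ^ (1 / t : ℝ) * x := by
        rw [mul_one_div_cancel hN, Real.rpow_one]
        congr 3
        push_cast
        field_simp

section Blocks

variable {t n : ℕ}

/-- `(a, o) ↦ t * a + o`, the `o`-th index of the `a`-th block. -/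
def blockEquiv (t n : ℕ) : Fin n × Fin t ≃ Fin (t * n) :=
  finProdFinEquiv.trans (finCongr (Nat.mul_comm n t))

lemma blockOf_eq (ht : 0 < t) (i : Fin (t * n)) :
    blockOf ht i = ((blockEquiv t n).symm i).1 := by
  ext
  simp [blockEquiv, blockOf]

lemma blockOf_blockEquiv (ht : 0 < t) (p : Fin n × Fin t) :
    blockOf ht (blockEquiv t n p) = p.1 := by
  simp [blockOf_eq]

lemma lt_of_blockOf_lt (ht : 0 < t) {i j : Fin (t * n)} (h : blockOf ht i < blockOf ht j) :
    i < j := by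
  by_contra! hji
  exact h.not_ge (Nat.div_le_div_right (c := t) hji)

lemma contMat_eq_true_iff (ht : 0 < t) (A : Matrix (Fin (t * n)) (Fin (t * n)) Bool)
    (a b : Fin n) :
    contMat ht A a b = true ↔
      ∃ i j, blockOf ht i = a ∧ blockOf ht j = b ∧ A i j = true := by
  simp [contMat]

lemma blockEquiv_blockOf (ht : 0 < t) (i : Fin (t * n)) :
    blockEquiv t n (blockOf ht i, ((blockEquiv t n).symm i).2) = i := by
  simp [blockOf_eq]

lemma contMat_blockOf_of_eq_true (ht : 0 < t) {A : Matrix (Fin (t * n)) (Fin (t * n)) Bool}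
    {i j : Fin (t * n)} (h : A i j = true) : contMat ht A (blockOf ht i) (blockOf ht j) = true :=
  (contMat_eq_true_iff ht A _ _).2 ⟨i, j, rfl, rfl, h⟩

lemma card_nonzero_block :
    Fintype.card {q : Fin t → Fin t → Bool // q ≠ fun _ _ => false} = 2 ^ (t * t) - 1 := by
  rw [Fintype.card_subtype_compl, Fintype.card_subtype_eq]
  simp [pow_mul]

lemma card_contMat_fiber_le (ht : 0 < t) (C : Matrix (Fin n) (Fin n) Bool) :
    #{A : Matrix (Fin (t * n)) (Fin (t * n)) Bool | contMat ht A = C} ≤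
      (2 ^ (t * t) - 1) ^ numOnes C := by
  classical
  set e := blockEquiv t n
  have hcod : Fintype.card ({p : Fin n × Fin n // C p.1 p.2 = true} →
      {q : Fin t → Fin t → Bool // q ≠ fun _ _ => false}) =
      (2 ^ (t * t) - 1) ^ numOnes C := by
    rw [Fintype.card_fun, card_nonzero_block, Fintype.card_subtype, numOnes]
  rw [← hcod, ← Fintype.card_subtype]
  refine Fintype.card_le_of_injective
    (fun A p => ⟨fun o o' => A.1 (e (p.1.1, o)) (e (p.1.2, o')), fun hzero => ?_⟩) ?_
  · obtain ⟨⟨a, b⟩, hab⟩ := p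
    rw [← A.2, contMat_eq_true_iff] at hab
    obtain ⟨i, j, rfl, rfl, hij⟩ := hab
    have := congrFun (congrFun hzero ((e.symm i).2)) ((e.symm j).2)
    simp only [e, blockEquiv_blockOf, hij] at this
    exact Bool.true_eq_false.mp this
  · rintro ⟨A, hA⟩ ⟨A', hA'⟩ hAA'
    ext i j
    by_cases hC : C (blockOf ht i) (blockOf ht j) = true
    · have hblock := congrArg Subtype.val (congrFun hAA' ⟨(blockOf ht i, blockOf ht j), hC⟩)
      have := congrFun (congrFun hblock (e.symm i).2) (e.symm j).2
      simpa only [e, blockEquiv_blockOf] using this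
    · have hfalse : ∀ B : Matrix (Fin (t * n)) (Fin (t * n)) Bool, contMat ht B = C →
          B i j = false := by
        rintro B rfl
        by_contra hB
        exact hC (contMat_blockOf_of_eq_true ht (Bool.not_eq_false _ ▸ hB))
      exact (hfalse A hA).trans (hfalse A' hA').symm

end Blocks

lemma permMatrix_eq_true_iff {n : ℕ} (σ : Equiv.Perm (Fin n)) (i j : Fin n) :
    permMatrix σ i j = true ↔ σ i = j := by
  simp [permMatrix]

lemma permMatrix_injective {n : ℕ} : Function.Injective (permMatrix (n := n)) := by
  intro σ τ h
  ext i : 1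
  have := congrFun (congrFun h i) (σ i)
  simp only [permMatrix, decide_true] at this
  exact (of_decide_eq_true this.symm).symm

section Permutations
variable {t n : ℕ}

lemma card_blockPreserving_le (ht : 0 < t) :
    #{h : Equiv.Perm (Fin (t * n)) | ∀ j, blockOf ht (h j) = blockOf ht j} ≤
      t.factorial ^ n := by
  set e := blockEquiv t n
  have hcod : Fintype.card (Fin n → Fin t ↪ Fin t) = t.factorial ^ n := by
    simp [Fintype.card_embedding_eq, Nat.descFactorial_self]
  rw [← hcod, ← Fintype.card_subtype]
  have hfst (h : {h : Equiv.Perm (Fin (t * n)) // ∀ j, blockOf ht (h j) = blockOf ht j})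
      (j : Fin (t * n)) : (e.symm (h.1 j)).1 = (e.symm j).1 := by
    simpa only [blockOf_eq] using h.2 j
  refine Fintype.card_le_of_injective
    (fun h b => ⟨fun o => (e.symm (h.1 (e (b, o)))).2, fun o o' hoo' => ?_⟩) fun h h' hhh' => ?_
  · have : e.symm (h.1 (e (b, o))) = e.symm (h.1 (e (b, o'))) :=
      Prod.ext (by simp only [hfst, Equiv.symm_apply_apply]) hoo'
    simpa using this
  · ext j : 2
    refine e.symm.injective (Prod.ext (by rw [hfst, hfst]) ?_)
    have := DFunLike.congr_fun (congrFun hhh' (e.symm j).1) (e.symm j).2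
    change (e.symm (h.1 (e ((e.symm j).1, (e.symm j).2)))).2 =
      (e.symm (h'.1 (e ((e.symm j).1, (e.symm j).2)))).2 at this
    simpa only [Prod.mk.eta, Equiv.apply_symm_apply] using this

lemma card_blockPattern_fiber_le (ht : 0 < t) (β : Fin (t * n) → Fin n) :
    #{σ : Equiv.Perm (Fin (t * n)) | ∀ i, blockOf ht (σ i) = β i} ≤ t.factorial ^ n := by
  rcases eq_empty_or_nonempty {σ : Equiv.Perm (Fin (t * n)) | ∀ i, blockOf ht (σ i) = β i}
    with hempty | ⟨σ₀, hσ₀⟩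
  · simp [hempty]
  refine (card_le_card_of_injOn (· * σ₀⁻¹) (fun σ hσ => ?_)
    (mul_left_injective σ₀⁻¹).injOn).trans (card_blockPreserving_le ht)
  simp only [mem_coe, mem_filter, mem_univ, true_and] at hσ hσ₀ ⊢
  intro j
  rw [Equiv.Perm.mul_apply, hσ, ← hσ₀ (σ₀⁻¹ j), Equiv.Perm.coe_inv,
    Equiv.apply_symm_apply]

def rowDeg (B : Matrix (Fin n) (Fin n) Bool) (a : Fin n) : ℕ :=
  #{x | B a x = true}

lemma card_contMat_perm_fiber_le (ht : 0 < t) (B : Matrix (Fin n) (Fin n) Bool) :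
    #{σ : Equiv.Perm (Fin (t * n)) | contMat ht (permMatrix σ) = B} ≤
      t.factorial ^ n * ∏ i, rowDeg B (blockOf ht i) := by
  unfold rowDeg
  rw [← Fintype.card_piFinset fun i => ({x | B (blockOf ht i) x = true} : Finset (Fin n))]
  refine card_le_mul_card_image_of_maps_to (f := fun σ i => blockOf ht (σ i))
    (fun σ hσ => ?_) _ fun β _ => ?_
  · simp only [mem_filter, mem_univ, true_and] at hσ
    simp only [Fintype.mem_piFinset, mem_filter, mem_univ, true_and]
    exact fun i => hσ ▸ contMat_blockOf_of_eq_true ht ((permMatrix_eq_true_iff _ _ _).2 rfl)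
  · refine (card_le_card fun σ hσ => ?_).trans (card_blockPattern_fiber_le ht β)
    simp only [mem_filter, mem_univ, true_and] at hσ ⊢
    exact congrFun hσ.2

lemma prod_rowDeg_blockOf (ht : 0 < t) (B : Matrix (Fin n) (Fin n) Bool) :
    ∏ i, rowDeg B (blockOf ht i) = ∏ a, rowDeg B a ^ t := by
  rw [← Fintype.prod_equiv (blockEquiv t n) (fun p => rowDeg B p.1) _
    fun p => by rw [blockOf_blockEquiv], Fintype.prod_prod_type]
  simp

lemma sum_rowDeg (B : Matrix (Fin n) (Fin n) Bool) : ∑ a, rowDeg B a = numOnes B := by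
  simp only [rowDeg, numOnes, card_filter, Fintype.sum_prod_type]

end Permutations

section Avoidance

variable {k : ℕ} {P : Matrix (Fin k) (Fin k) Bool} {t n : ℕ}

lemma Avoids.contMat (hP : IsPermMatrix P) (ht : 0 < t)
    {A : Matrix (Fin (t * n)) (Fin (t * n)) Bool} (hA : Avoids P A) :
    Avoids P (contMat ht A) := by
  obtain ⟨π, rfl⟩ := hP
  rintro ⟨r, c, hr, hc, hrc⟩
  have hone : ∀ i, ∃ u v, blockOf ht u = r i ∧ blockOf ht v = c (π i) ∧ A u v = true :=
    fun i => (contMat_eq_true_iff ht A _ _).1 (hrc i (π i) ((permMatrix_eq_true_iff ..).2 rfl))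
  choose u v hu hv huv using hone
  refine hA ⟨u, fun j => v (π.symm j), fun i i' h => ?_, fun j j' h => ?_, fun i j hij => ?_⟩
  · exact lt_of_blockOf_lt ht (by simpa only [hu] using hr h)
  · exact lt_of_blockOf_lt ht (by simpa only [hv, π.apply_symm_apply] using hc h)
  · obtain rfl := (permMatrix_eq_true_iff ..).1 hij
    simpa using huv i

lemma numOnes_le_exFH {A : Matrix (Fin n) (Fin n) Bool} (hA : Avoids P A) :
    numOnes A ≤ exFH P n := by
  refine le_csSup ⟨n * n, ?_⟩ ⟨A, hA, rfl⟩
  rintro m ⟨B, -, rfl⟩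
  exact (card_filter_le _ _).trans (by simp)

open scoped Classical in
noncomputable def avoiders (P : Matrix (Fin k) (Fin k) Bool) (n : ℕ) :
    Finset (Matrix (Fin n) (Fin n) Bool) :=
  {A | Avoids P A}

lemma mem_avoiders {A : Matrix (Fin n) (Fin n) Bool} : A ∈ avoiders P n ↔ Avoids P A := by
  simp [avoiders]

open scoped Classical in
lemma sw_eq_card : SW P n = #{σ : Equiv.Perm (Fin n) | Avoids P (permMatrix σ)} := by
  rw [← Fintype.card_subtype, ← Nat.card_eq_fintype_card, SW]
  refine Nat.card_congr
    (Equiv.ofBijective (fun σ => ⟨permMatrix σ.1, ⟨σ.1, rfl⟩, σ.2⟩) ⟨?_, ?_⟩).symm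
  · exact fun σ τ h => Subtype.ext (permMatrix_injective (congrArg Subtype.val h))
  · rintro ⟨A, ⟨σ, rfl⟩, hA⟩
    exact ⟨⟨σ, hA⟩, rfl⟩

lemma card_avoiders_two_mul_le (hP : IsPermMatrix P) (m : ℕ) :
    #(avoiders P (2 * m)) ≤ 15 ^ exFH P m * #(avoiders P m) := by
  refine card_le_mul_card_image_of_maps_to (f := contMat two_pos)
    (fun A hA => mem_avoiders.2 ((mem_avoiders.1 hA).contMat hP two_pos)) _ fun C hC => ?_
  calc #{A ∈ avoiders P (2 * m) | contMat two_pos A = C}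
      ≤ #{A : Matrix (Fin (2 * m)) (Fin (2 * m)) Bool | contMat two_pos A = C} :=
        card_le_card (filter_subset_filter _ (subset_univ _))
    _ ≤ (2 ^ (2 * 2) - 1) ^ numOnes C := card_contMat_fiber_le two_pos C
    _ ≤ 15 ^ exFH P m := Nat.pow_le_pow_right (by norm_num) (numOnes_le_exFH (mem_avoiders.1 hC))

lemma card_avoiders_two_pow_le (hP : IsPermMatrix P) (j : ℕ) :
    #(avoiders P (2 ^ j)) ≤ 2 * 15 ^ ∑ i ∈ range j, exFH P (2 ^ i) := by
  induction j with
  | zero =>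
    calc #(avoiders P (2 ^ 0)) ≤ Fintype.card (Matrix (Fin 1) (Fin 1) Bool) := card_le_univ _
      _ = 2 * 15 ^ 0 := by decide
  | succ j ih =>
    calc #(avoiders P (2 ^ (j + 1))) ≤ 15 ^ exFH P (2 ^ j) * #(avoiders P (2 ^ j)) := by
          rw [pow_succ']; exact card_avoiders_two_mul_le hP _
      _ ≤ 15 ^ exFH P (2 ^ j) * (2 * 15 ^ ∑ i ∈ range j, exFH P (2 ^ i)) := by gcongr
      _ = 2 * 15 ^ ∑ i ∈ range (j + 1), exFH P (2 ^ i) := by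
          rw [sum_range_succ, pow_add]; ring

lemma card_contMat_perm_fiber_le_of_avoids (ht : 0 < t) (hn : 0 < n)
    {B : Matrix (Fin n) (Fin n) Bool} (hB : Avoids P B) :
    (#{σ : Equiv.Perm (Fin (t * n)) | contMat ht (permMatrix σ) = B} : ℝ) ≤
      t.factorial ^ n * ((exFH P n : ℝ) / n) ^ (t * n) := by
  have hdeg : ∏ a, (rowDeg B a : ℝ) ≤ ((exFH P n : ℝ) / n) ^ n := calc
    ∏ a, (rowDeg B a : ℝ) ≤ ((∑ a, (rowDeg B a : ℝ)) / n) ^ n := by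
      simpa using prod_le_mean_pow univ fun a _ => (rowDeg B a).cast_nonneg
    _ = ((numOnes B : ℝ) / n) ^ n := by rw [← Nat.cast_sum, sum_rowDeg]
    _ ≤ ((exFH P n : ℝ) / n) ^ n := by gcongr; exact_mod_cast numOnes_le_exFH hB
  calc (#{σ : Equiv.Perm (Fin (t * n)) | contMat ht (permMatrix σ) = B} : ℝ)
      ≤ ((t.factorial ^ n * ∏ i, rowDeg B (blockOf ht i) : ℕ) : ℝ) := by
        exact_mod_cast card_contMat_perm_fiber_le ht B
    _ = t.factorial ^ n * (∏ a, (rowDeg B a : ℝ)) ^ t := by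
        rw [prod_rowDeg_blockOf]; push_cast; rw [prod_pow]
    _ ≤ t.factorial ^ n * (((exFH P n : ℝ) / n) ^ n) ^ t := by gcongr
    _ = t.factorial ^ n * ((exFH P n : ℝ) / n) ^ (t * n) := by rw [← pow_mul, mul_comm n t]

lemma sw_le_card_avoiders_mul (hP : IsPermMatrix P) (ht : 0 < t) (hn : 0 < n) :
    (SW P (t * n) : ℝ) ≤
      #(avoiders P n) * (t.factorial ^ n * ((exFH P n : ℝ) / n) ^ (t * n)) := by
  classical
  rw [sw_eq_card, card_eq_sum_card_fiberwise (f := fun σ => contMat ht (permMatrix σ))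
    (t := avoiders P n) fun σ hσ => mem_avoiders.2 ((mem_filter.1 hσ).2.contMat hP ht)]
  push_cast
  refine (sum_le_sum fun B hB => ?_).trans_eq (by rw [sum_const, nsmul_eq_mul])
  exact (Nat.cast_le.2 (card_le_card (filter_subset_filter _ (subset_univ _)))).trans
    (card_contMat_perm_fiber_le_of_avoids ht hn (mem_avoiders.1 hB))

lemma sw_rpow_le (hP : IsPermMatrix P) (ht : 0 < t) (j : ℕ) :
    (SW P (t * 2 ^ j) : ℝ) ^ (1 / ((t * 2 ^ j : ℕ) : ℝ)) ≤
      2 ^ (1 / ((t * 2 ^ j : ℕ) : ℝ)) *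
        15 ^ ((∑ i ∈ range j, (exFH P (2 ^ i) : ℝ)) / 2 ^ j / t) *
        t.factorial ^ (1 / t : ℝ) * ((exFH P (2 ^ j) : ℝ) / 2 ^ j) := by
  set S := ∑ i ∈ range j, (exFH P (2 ^ i) : ℝ)
  have hcount : (SW P (t * 2 ^ j) : ℝ) ≤ (2 * 15 ^ S) *
      (t.factorial ^ 2 ^ j * ((exFH P (2 ^ j) : ℝ) / (2 ^ j : ℕ)) ^ (t * 2 ^ j)) := by
    refine (sw_le_card_avoiders_mul hP ht (by positivity)).trans
      (mul_le_mul_of_nonneg_right ?_ (by positivity))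
    rw [show S = ((∑ i ∈ range j, exFH P (2 ^ i) : ℕ) : ℝ) by push_cast; rfl,
      Real.rpow_natCast]
    exact_mod_cast card_avoiders_two_pow_le hP j
  have h15 : ((2 : ℝ) * 15 ^ S) ^ (1 / ((t * 2 ^ j : ℕ) : ℝ)) =
      2 ^ (1 / ((t * 2 ^ j : ℕ) : ℝ)) * 15 ^ (S / 2 ^ j / t) := by
    rw [Real.mul_rpow (by norm_num) (by positivity), ← Real.rpow_mul (by norm_num)]
    congr 2
    push_cast
    field_simp
  have := rpow_le_of_le_mul_pow (by positivity) (by positivity) (by positivity) (by positivity)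
    ht (by positivity) hcount
  rwa [h15, Nat.cast_pow, Nat.cast_ofNat] at this

end Avoidance

theorem stanley_wilf_le_of_t {k : ℕ} (P : Matrix (Fin k) (Fin k) Bool)
    (hP : IsPermMatrix P) (t : ℕ) (ht : 0 < t) (cP sP : ℝ)
    (hc : Tendsto (fun n : ℕ => (exFH P n : ℝ) / n) atTop (nhds cP))
    (hs : Tendsto (fun n : ℕ => (SW P n : ℝ) ^ ((1 : ℝ) / n)) atTop (nhds sP)) :
    sP ≤ (15 : ℝ) ^ (cP / t) * ((t.factorial : ℝ)) ^ ((1 : ℝ) / t) * cP := by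
  have hpow : Tendsto (fun j : ℕ => 2 ^ j) atTop atTop :=
    tendsto_pow_atTop_atTop_of_one_lt one_lt_two
  have hN : Tendsto (fun j : ℕ => t * 2 ^ j) atTop atTop :=
    tendsto_atTop_mono (fun j => Nat.le_mul_of_pos_left _ ht) hpow
  have hex : Tendsto (fun j => (exFH P (2 ^ j) : ℝ) / 2 ^ j) atTop (nhds cP) := by
    simpa only [Function.comp_def, Nat.cast_pow, Nat.cast_ofNat] using hc.comp hpow
  have hinvN : Tendsto (fun j : ℕ => 1 / ((t * 2 ^ j : ℕ) : ℝ)) atTop (nhds 0) :=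
    tendsto_one_div_atTop_nhds_zero_nat.comp hN
  have hlim : Tendsto (fun j : ℕ => 2 ^ (1 / ((t * 2 ^ j : ℕ) : ℝ)) *
      15 ^ ((∑ i ∈ range j, (exFH P (2 ^ i) : ℝ)) / 2 ^ j / t) *
        t.factorial ^ (1 / t : ℝ) * ((exFH P (2 ^ j) : ℝ) / 2 ^ j)) atTop
      (nhds (2 ^ (0 : ℝ) * 15 ^ (cP / t) * t.factorial ^ (1 / t : ℝ) * cP)) :=
    (((tendsto_const_nhds.rpow hinvN (by norm_num)).mul (tendsto_const_nhds.rpow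
      ((tendsto_sum_div_two_pow hex).div_const _) (by norm_num))).mul_const _).mul hex
  have hle := le_of_tendsto_of_tendsto' (hs.comp hN) hlim (sw_rpow_le hP ht)
  rwa [Real.rpow_zero, one_mul] at hle
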